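/- Two cells i ≠ j in I are independent with respect to L (i.e., π_{{i,j}}(L) = π_{{i}}(L) × π_{{j}}(L)) if and only if L is generated by the complex whose maximal simplices are I∖{i} and I∖{j} (equivalently, the complex of all subsets of I not containing both i and j). -/

import Mathlib

/-- `W` determines output coordinate `i` of `f`: the value `f x i` only
depends on the restriction of `x` to `W`. -/
def Determines {B J A I : Type*} (f : (J → B) → (I → A)) (i : I) (W : Set J) : Prop :=
  ∀ x y : J → B, (∀ j ∈ W, x j = y j) → f x i = f y i

/-- The input window of output coordinate `i`: the intersection of all
determining sets (which, for finite data, is the smallest determining set). -/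
def window {B J A I : Type*} (f : (J → B) → (I → A)) (i : I) : Set J :=
  ⋂₀ {W : Set J | Determines f i W}

/-- The dual window of an input coordinate `j`. -/
def dualWindow {B J A I : Type*} (f : (J → B) → (I → A)) (j : J) : Set I :=
  {i : I | j ∈ window f i}

/-- The communication complex of `f`: `S ∈ K_f` iff `⋂_{i ∈ S} W_f(i) ≠ ∅`
(the empty intersection being all of `J`). -/
def commComplex {B J A I : Type*} (f : (J → B) → (I → A)) : Set (Set I) :=
  {S : Set I | (⋂ i ∈ S, window f i).Nonempty}

/-- A complex `K` over `I` generates the language `L ⊆ A^I` if some function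
`f : B^J → A^I` (with `B, J` finite, `J` nonempty) has image `L` and
communication complex contained in `K`. -/
def Generates {A I : Type*} (K : Set (Set I)) (L : Set (I → A)) : Prop :=
  ∃ (B J : Type) (_ : Finite B) (_ : Finite J) (_ : Nonempty J)
    (f : (J → B) → (I → A)), Set.range f = L ∧ commComplex f ⊆ K

/-- A complex is connected if no nontrivial partition of the vertex set splits
all of its simplices. -/
def ConnectedComplex {I : Type*} (K : Set (Set I)) : Prop :=
  ¬ ∃ I0 : Set I, I0 ≠ ∅ ∧ I0 ≠ Set.univ ∧ ∀ S ∈ K, S ⊆ I0 ∨ S ⊆ I0ᶜ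

/-- A simplicial complex: a downward closed collection of subsets. -/
def IsComplex {I : Type*} (K : Set (Set I)) : Prop :=
  ∀ S ∈ K, ∀ T ⊆ S, T ∈ K

/-- The 1-skeleton of a complex, as a simple graph. -/
def skeletonGraph {I : Type*} (K : Set (Set I)) : SimpleGraph I :=
  SimpleGraph.fromRel (fun i j => ({i, j} : Set I) ∈ K)

/-- The complex associated to a graph: the empty set, the singletons, and the
edges. -/
def treeComplex {I : Type*} (G : SimpleGraph I) : Set (Set I) :=
  {S | S = ∅ ∨ (∃ i, S = {i}) ∨ ∃ i j, G.Adj i j ∧ S = ({i, j} : Set I)}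

/-- The maximal simplices of a complex. -/
def maxSimplices {I : Type*} (K : Set (Set I)) : Set (Set I) :=
  {S | S ∈ K ∧ ∀ T ∈ K, S ⊆ T → S = T}

/-- The image `f_*(K)` of a complex `K` on the input coordinates of `f`:
generated by the unions of dual windows over simplices of `K`. -/
def pushComplex {B J A I : Type*} (f : (J → B) → (I → A)) (K : Set (Set J)) : Set (Set I) :=
  {T : Set I | ∃ S ∈ K, T ⊆ ⋃ j ∈ S, dualWindow f j}


/-! Two output cells are independent exactly when their input windows can be taken disjoint.
If the windows of `i` and `j` are disjoint, splicing the input of `x` on the window of `i` with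
the input of `y` elsewhere produces a word of `L` agreeing with `x` at `i` and with `y` at `j`.
Conversely, if every such pair is realised in `L`, the map sending two words `x, y ∈ L` to a
chosen word realising `(x i, y j)` (and to `x` itself when `y j = x j`) has image `L`, and reads
cell `i` only from its first input and cell `j` only from its second. -/

section Windows

variable {B J A I : Type*} {f : (J → B) → (I → A)}

lemma Determines.inter {i : I} {W₁ W₂ : Set J} (h₁ : Determines f i W₁)
    (h₂ : Determines f i W₂) : Determines f i (W₁ ∩ W₂) := by
  classical
  intro x y hxy
  calc f x i = f (W₁.piecewise x y) i :=
        h₁ _ _ fun k hk => (Set.piecewise_eq_of_mem _ _ _ hk).symm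
    _ = f y i := h₂ _ _ fun k hk => by
        by_cases hk₁ : k ∈ W₁
        · rw [Set.piecewise_eq_of_mem _ _ _ hk₁]; exact hxy k ⟨hk₁, hk⟩
        · exact Set.piecewise_eq_of_notMem _ _ _ hk₁

lemma determines_univ (i : I) : Determines f i Set.univ := fun _ _ hxy =>
  congrArg (f · i) (funext fun k => hxy k trivial)

lemma determines_window [Finite J] (i : I) : Determines f i (window f i) :=
  InfClosed.sInf_mem (s := {W | Determines f i W}) (fun _ h₁ _ h₂ => h₁.inter h₂)
    (Set.toFinite _) (determines_univ i) subset_rfl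

lemma window_subset_of_determines {i : I} {W : Set J} (h : Determines f i W) :
    window f i ⊆ W :=
  Set.sInter_subset_of_mem h

lemma commComplex_subset_iff_disjoint_window {i j : I} :
    commComplex f ⊆ {S : Set I | ¬(i ∈ S ∧ j ∈ S)} ↔
      Disjoint (window f i) (window f j) := by
  simp only [commComplex, Set.subset_def, Set.mem_ofPred_eq, Set.disjoint_left]
  constructor
  · intro h t hti htj
    refine h {i, j} ⟨t, Set.mem_iInter₂.mpr ?_⟩
      ⟨Set.mem_insert _ _, Set.mem_insert_of_mem _ rfl⟩
    rintro k (rfl | rfl)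
    exacts [hti, htj]
  · rintro h S ⟨t, ht⟩ ⟨hiS, hjS⟩
    exact h (Set.mem_iInter₂.mp ht i hiS) (Set.mem_iInter₂.mp ht j hjS)

lemma exists_splice_of_disjoint_window [Finite J] {i j : I}
    (h : Disjoint (window f i) (window f j)) (u v : J → B) :
    ∃ z, f z i = f u i ∧ f z j = f v j := by
  classical
  refine ⟨(window f i).piecewise u v, ?_, ?_⟩
  · exact determines_window i _ _ fun k hk => Set.piecewise_eq_of_mem _ _ _ hk
  · exact determines_window j _ _ fun k hk =>
      Set.piecewise_eq_of_notMem _ _ _ (Set.disjoint_right.mp h hk)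

end Windows

section Independence

variable {A I : Type} {L : Set (I → A)} {i j : I}

lemma proj_pair_eq_prod_iff :
    ({p : A × A | ∃ x ∈ L, p = (x i, x j)} =
      {a | ∃ x ∈ L, x i = a} ×ˢ {a | ∃ x ∈ L, x j = a}) ↔
    ∀ x ∈ L, ∀ y ∈ L, ∃ z ∈ L, z i = x i ∧ z j = y j := by
  constructor
  · intro h x hx y hy
    have hxy : (x i, y j) ∈ {p : A × A | ∃ x ∈ L, p = (x i, x j)} :=
      h ▸ ⟨⟨x, hx, rfl⟩, y, hy, rfl⟩
    obtain ⟨z, hz, hzxy⟩ := hxy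
    exact ⟨z, hz, (Prod.ext_iff.mp hzxy).1.symm, (Prod.ext_iff.mp hzxy).2.symm⟩
  · intro h
    ext ⟨a, b⟩
    constructor
    · rintro ⟨x, hx, hab⟩
      obtain ⟨rfl, rfl⟩ := Prod.ext_iff.mp hab
      exact ⟨⟨x, hx, rfl⟩, x, hx, rfl⟩
    · rintro ⟨⟨x, hx, rfl⟩, y, hy, rfl⟩
      obtain ⟨z, hz, hzi, hzj⟩ := h x hx y hy
      exact ⟨z, hz, by rw [hzi, hzj]⟩

lemma exists_splice_map (h : ∀ x ∈ L, ∀ y ∈ L, ∃ z ∈ L, z i = x i ∧ z j = y j) :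
    ∃ s : L → L → L,
      (∀ x y, (s x y : I → A) i = (x : I → A) i ∧ (s x y : I → A) j = (y : I → A) j) ∧
        ∀ x, s x x = x := by
  classical
  choose z hzL hzi hzj using h
  refine ⟨fun x y =>
    if (x : I → A) j = (y : I → A) j then x else ⟨z x x.2 y y.2, hzL _ _ _ _⟩,
    fun x y => ?_, fun x => if_pos rfl⟩
  dsimp only
  split_ifs with hxy
  exacts [⟨rfl, hxy⟩, ⟨hzi _ _ _ _, hzj _ _ _ _⟩]

lemma generates_of_forall_splice [Finite A] [Finite I]
    (h : ∀ x ∈ L, ∀ y ∈ L, ∃ z ∈ L, z i = x i ∧ z j = y j) :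
    Generates {S : Set I | ¬(i ∈ S ∧ j ∈ S)} L := by
  obtain ⟨s, hs, hss⟩ := exists_splice_map h
  set f : (Bool → L) → (I → A) := fun g => s (g true) (g false)
  have hrange : Set.range f = L := by
    refine Set.Subset.antisymm (Set.range_subset_iff.mpr fun g => (s _ _).2) fun x hx => ?_
    exact ⟨fun _ => ⟨x, hx⟩, congrArg Subtype.val (hss _)⟩
  have hi : Determines f i {true} := fun x y hxy => by
    simp only [f, (hs _ _).1, hxy true rfl]
  have hj : Determines f j {false} := fun x y hxy => by
    simp only [f, (hs _ _).2, hxy false rfl]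
  refine ⟨L, Bool, inferInstance, inferInstance, inferInstance, f, hrange, ?_⟩
  rw [commComplex_subset_iff_disjoint_window]
  exact Set.disjoint_of_subset (window_subset_of_determines hi) (window_subset_of_determines hj)
    (by simp)

lemma forall_splice_of_generates (h : Generates {S : Set I | ¬(i ∈ S ∧ j ∈ S)} L) :
    ∀ x ∈ L, ∀ y ∈ L, ∃ z ∈ L, z i = x i ∧ z j = y j := by
  obtain ⟨B, J, _, _, _, f, rfl, hK⟩ := h
  rw [commComplex_subset_iff_disjoint_window] at hK
  rintro _ ⟨u, rfl⟩ _ ⟨v, rfl⟩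
  obtain ⟨z, hzi, hzj⟩ := exists_splice_of_disjoint_window hK u v
  exact ⟨f z, ⟨z, rfl⟩, hzi, hzj⟩

end Independence

theorem stmt12_general {A I : Type} [Finite A] [Finite I] (L : Set (I → A)) (i j : I) :
    ({p : A × A | ∃ x ∈ L, p = (x i, x j)} =
      {a | ∃ x ∈ L, x i = a} ×ˢ {a | ∃ x ∈ L, x j = a}) ↔
    Generates {S : Set I | ¬(i ∈ S ∧ j ∈ S)} L := by
  rw [proj_pair_eq_prod_iff]
  exact ⟨generates_of_forall_splice, forall_splice_of_generates⟩

/-- two distinct cells `i, j` are independent w.r.t. `L`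
(the projection of `L` to `{i,j}` is the product of the projections to `{i}`
and `{j}`) iff `L` is generated by the complex of all sets not containing both
`i` and `j` (whose maximal simplices are `I∖{i}` and `I∖{j}`). -/
theorem stmt12 {A I : Type} [Finite A] [Finite I] (L : Set (I → A)) (i j : I)
    (hij : i ≠ j) :
    ({p : A × A | ∃ x ∈ L, p = (x i, x j)} =
      {a | ∃ x ∈ L, x i = a} ×ˢ {a | ∃ x ∈ L, x j = a}) ↔
    Generates {S : Set I | ¬(i ∈ S ∧ j ∈ S)} L :=
  stmt12_general L i j
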